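/- If B has intrinsic density r with 0 < r < 1, then the skip rule applied to B ⊕ B that always takes even-indexed bits and takes the odd-indexed bit 2n+1 only if bit 2n is 1 selects a sequence whose density of 1's is 2r/(r+1). -/

import Mathlib

open Filter Topology Classical

/-- `cnt A n = |A ∩ [0,n)|`. -/
noncomputable def cnt (A : Set ℕ) (n : ℕ) : ℕ :=
  ((Finset.range n).filter (· ∈ A)).card

/-- `dens A n = |A ∩ [0,n)| / n`, the density of `A` at `n`. -/
noncomputable def dens (A : Set ℕ) (n : ℕ) : ℝ := (cnt A n : ℝ) / n

/-- `A` has intrinsic density `α`: `π(A)` has density `α` for every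
computable permutation `π` of `ℕ`. -/
def IntrinsicDensity (A : Set ℕ) (α : ℝ) : Prop :=
  ∀ π : ℕ ≃ ℕ, Computable ⇑π → Tendsto (dens (⇑π '' A)) atTop (𝓝 α)

/-- `B ⊕ B = {2n : n ∈ B} ∪ {2n+1 : n ∈ B}`. -/
def oplus (B : Set ℕ) : Set ℕ :=
  {m | ∃ n ∈ B, m = 2 * n} ∪ {m | ∃ n ∈ B, m = 2 * n + 1}

/-- The positions of `B ⊕ B` inspected (and taken) by the skip rule that takes
every even bit `2n` and takes bit `2n+1` iff bit `2n` is a `1`. -/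
def ruleSel (B : Set ℕ) : Set ℕ :=
  {m | ∃ n, m = 2 * n} ∪ {m | ∃ n ∈ B, m = 2 * n + 1}


-- basic membership lemmas
lemma mem_ruleSel_even (B : Set ℕ) (n : ℕ) : 2 * n ∈ ruleSel B :=
  Or.inl ⟨n, rfl⟩

lemma mem_ruleSel_odd (B : Set ℕ) (n : ℕ) : 2 * n + 1 ∈ ruleSel B ↔ n ∈ B := by
  constructor
  · rintro (⟨k, hk⟩ | ⟨k, hk, hk2⟩)
    · omega
    · obtain rfl : n = k := by omega
      exact hk
  · exact fun h => Or.inr ⟨n, h, rfl⟩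

lemma mem_oplus_even (B : Set ℕ) (n : ℕ) : 2 * n ∈ oplus B ↔ n ∈ B := by
  constructor
  · rintro (⟨k, hk, hk2⟩ | ⟨k, hk, hk2⟩)
    · obtain rfl : n = k := by omega
      exact hk
    · omega
  · exact fun h => Or.inl ⟨n, h, rfl⟩

lemma mem_oplus_odd (B : Set ℕ) (n : ℕ) : 2 * n + 1 ∈ oplus B ↔ n ∈ B := by
  constructor
  · rintro (⟨k, hk, hk2⟩ | ⟨k, hk, hk2⟩)
    · omega
    · obtain rfl : n = k := by omega
      exact hk
  · exact fun h => Or.inr ⟨n, h, rfl⟩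

lemma ruleSel_infinite (B : Set ℕ) : (setOf (· ∈ ruleSel B)).Infinite := by
  apply Set.infinite_of_injective_forall_mem (f := fun n => 2 * n)
    (hi := fun a b h => by simp only at h; omega)
  intro n; exact mem_ruleSel_even B n

lemma cnt_eq_count (A : Set ℕ) (n : ℕ) : cnt A n = Nat.count (· ∈ A) n := by
  rw [Nat.count_eq_card_filter_range, cnt]

lemma cnt_succ (A : Set ℕ) (n : ℕ) :
    cnt A (n + 1) = cnt A n + if n ∈ A then 1 else 0 := by
  rw [cnt_eq_count, cnt_eq_count, Nat.count_succ]

lemma cnt_mono (A : Set ℕ) : Monotone (cnt A) := by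
  intro a b h
  rw [cnt_eq_count, cnt_eq_count]
  exact Nat.count_monotone _ h

lemma cnt_le (A : Set ℕ) (n : ℕ) : cnt A n ≤ n := by
  rw [cnt_eq_count]; exact Nat.count_le _

section main
variable (B : Set ℕ)

local notation "p" => (· ∈ ruleSel B)

-- count of ruleSel below 2n
lemma count_ruleSel (n : ℕ) : Nat.count p (2 * n) = n + cnt B n := by
  induction n with
  | zero => simp [cnt]
  | succ n ih =>
    have h2 : 2 * (n + 1) = (2 * n + 1) + 1 := by ring
    rw [h2, Nat.count_succ, Nat.count_succ, ih, cnt_succ]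
    by_cases h : n ∈ B
    · simp [h, mem_ruleSel_even B n, (mem_ruleSel_odd B n).2 h]
      omega
    · have : ¬ (2 * n + 1 ∈ ruleSel B) := fun hc => h ((mem_ruleSel_odd B n).1 hc)
      simp [h, mem_ruleSel_even B n, this]
      omega

noncomputable def S : Set ℕ := {m | Nat.nth p m ∈ oplus B}

lemma cnt_S_checkpoint (n : ℕ) :
    cnt (S B) (Nat.count p (2 * n)) = 2 * cnt B n := by
  induction n with
  | zero => simp [cnt]
  | succ n ih =>
    have h2 : 2 * (n + 1) = (2 * n + 1) + 1 := by ring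
    have hnth : Nat.nth p (Nat.count p (2 * n)) = 2 * n :=
      Nat.nth_count (mem_ruleSel_even B n)
    rw [h2, Nat.count_succ, Nat.count_succ]
    by_cases h : n ∈ B
    · have ho : (2 * n + 1) ∈ ruleSel B := (mem_ruleSel_odd B n).2 h
      have hnth2 : Nat.nth p (Nat.count p (2 * n) + 1) = 2 * n + 1 := by
        have := Nat.nth_count ho
        rwa [Nat.count_succ, if_pos (mem_ruleSel_even B n)] at this
      simp only [if_pos (mem_ruleSel_even B n), if_pos ho]
      rw [show Nat.count p (2*n) + 1 + 1 = (Nat.count p (2*n) + 1) + 1 from rfl,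
        cnt_succ, cnt_succ, ih, cnt_succ]
      have m1 : Nat.count p (2*n) ∈ S B := by
        show Nat.nth p _ ∈ oplus B
        rw [hnth]; exact (mem_oplus_even B n).2 h
      have m2 : Nat.count p (2*n) + 1 ∈ S B := by
        show Nat.nth p _ ∈ oplus B
        rw [hnth2]; exact (mem_oplus_odd B n).2 h
      simp [m1, m2, h]; ring
    · have ho : ¬ ((2 * n + 1) ∈ ruleSel B) := fun hc => h ((mem_ruleSel_odd B n).1 hc)
      simp only [if_pos (mem_ruleSel_even B n), if_neg ho]
      rw [cnt_succ, ih, cnt_succ]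
      have m1 : ¬ (Nat.count p (2*n) ∈ S B) := by
        show ¬ (Nat.nth p _ ∈ oplus B)
        rw [hnth]; exact fun hc => h ((mem_oplus_even B n).1 hc)
      simp [m1, h]
lemma cnt_succ_le (A : Set ℕ) (n : ℕ) : cnt A (n + 1) ≤ cnt A n + 1 := by
  rw [cnt_succ]; split_ifs <;> omega

lemma key (M : ℕ) (hM : 2 ≤ M) :
    1 ≤ Nat.nth p M / 2 ∧
    (Nat.nth p M / 2) + cnt B (Nat.nth p M / 2) ≤ M ∧
    M ≤ (Nat.nth p M / 2) + cnt B (Nat.nth p M / 2) + 1 ∧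
    2 * cnt B (Nat.nth p M / 2) ≤ cnt (S B) M ∧
    cnt (S B) M ≤ 2 * cnt B (Nat.nth p M / 2) + 2 := by
  set n := Nat.nth p M / 2 with hn
  have hinf := ruleSel_infinite B
  have hMn : M ≤ Nat.nth p M := (Nat.nth_strictMono hinf).le_apply
  have hle : 2 * n ≤ Nat.nth p M := by omega
  have hlt : Nat.nth p M < 2 * (n + 1) := by omega
  have h1 : 1 ≤ n := by omega
  have hcount : Nat.count p (Nat.nth p M) = M := Nat.count_nth_of_infinite hinf M
  have hglow : Nat.count p (2 * n) ≤ M := hcount ▸ Nat.count_monotone _ hle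
  have hghigh : M < Nat.count p (2 * (n + 1)) := by
    have h0 : Nat.count p (Nat.nth p M + 1) = M + 1 :=
      Nat.count_nth_succ_of_infinite hinf M
    have h2 := Nat.count_monotone p (show Nat.nth p M + 1 ≤ 2 * (n + 1) by omega)
    omega
  have hlow2 : 2 * cnt B n ≤ cnt (S B) M := by
    have := cnt_mono (S B) hglow
    rwa [cnt_S_checkpoint] at this
  have hhigh2 : cnt (S B) M ≤ 2 * cnt B n + 2 := by
    have h3 := cnt_mono (S B) (le_of_lt hghigh)
    rw [cnt_S_checkpoint] at h3
    have h4 := cnt_succ_le B n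
    omega
  have hg1 : n + cnt B n ≤ M := by rwa [count_ruleSel] at hglow
  have hg2 : M ≤ n + cnt B n + 1 := by
    rw [count_ruleSel] at hghigh
    have h4 := cnt_succ_le B n
    omega
  exact ⟨h1, hg1, hg2, hlow2, hhigh2⟩

end main

theorem stmt18 (B : Set ℕ) (r : ℝ) (hr0 : 0 < r) (hr1 : r < 1)
    (hB : IntrinsicDensity B r) :
    Tendsto (dens {m | Nat.nth (· ∈ ruleSel B) m ∈ oplus B}) atTop
      (𝓝 (2 * r / (r + 1))) := by
  classical
  have hinf := ruleSel_infinite B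
  -- density of B from intrinsic density via the identity permutation
  have hdensB : Tendsto (fun n => (cnt B n : ℝ) / n) atTop (𝓝 r) := by
    have hc : Computable ⇑(Equiv.refl ℕ) := by
      simpa [Equiv.coe_refl] using Computable.id
    have := hB (Equiv.refl ℕ) hc
    have h' : Tendsto (dens B) atTop (𝓝 r) := by simpa [Equiv.coe_refl, Set.image_id] using this
    exact h'
  have hr1' : r + 1 ≠ 0 := by linarith
  -- lower comparison sequence
  have hF : Tendsto (fun n : ℕ => (2 * cnt B n : ℝ) / ((n : ℝ) + cnt B n + 1))
      atTop (𝓝 (2 * r / (r + 1))) := by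
    have hnum : Tendsto (fun n : ℕ => 2 * ((cnt B n : ℝ) / n)) atTop (𝓝 (2 * r)) :=
      (hdensB.const_mul 2)
    have hden : Tendsto (fun n : ℕ => 1 + (cnt B n : ℝ) / n + 1 / n) atTop (𝓝 (r + 1)) := by
      have := (tendsto_const_nhds (x := (1:ℝ))).add hdensB |>.add tendsto_one_div_atTop_nhds_zero_nat
      simpa using this.congr (fun n => by ring) |>.congr' (Eventually.of_forall fun n => rfl)
        |>.mono_right (le_of_eq (by norm_num; ring_nf))
    have hdiv := hnum.div hden hr1'
    refine hdiv.congr' ?_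
    filter_upwards [eventually_ge_atTop 1] with n hn
    have hn0 : (n : ℝ) ≠ 0 := by positivity
    simp only [Pi.div_apply]
    field_simp
  -- upper comparison sequence
  have hG : Tendsto (fun n : ℕ => ((2 * cnt B n : ℝ) + 2) / ((n : ℝ) + cnt B n))
      atTop (𝓝 (2 * r / (r + 1))) := by
    have hnum : Tendsto (fun n : ℕ => 2 * ((cnt B n : ℝ) / n) + 2 / n) atTop (𝓝 (2 * r)) := by
      have h2 : Tendsto (fun n : ℕ => 2 / (n:ℝ)) atTop (𝓝 0) := by
        simpa [div_eq_mul_inv] using (tendsto_one_div_atTop_nhds_zero_nat (𝕜 := ℝ)).const_mul 2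
      simpa using (hdensB.const_mul 2).add h2
    have hden : Tendsto (fun n : ℕ => 1 + (cnt B n : ℝ) / n) atTop (𝓝 (r + 1)) := by
      have := (tendsto_const_nhds (x := (1:ℝ))).add hdensB
      simpa [add_comm] using this
    have hdiv := hnum.div hden hr1'
    refine hdiv.congr' ?_
    filter_upwards [eventually_ge_atTop 1] with n hn
    have hn0 : (n : ℝ) ≠ 0 := by positivity
    simp only [Pi.div_apply]
    field_simp
  -- n(M) → ∞
  have hnM : Tendsto (fun M => Nat.nth (· ∈ ruleSel B) M / 2) atTop atTop := by
    refine tendsto_atTop_atTop.2 fun b => ⟨2 * b, fun a ha => ?_⟩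
    have : a ≤ Nat.nth (· ∈ ruleSel B) a := (Nat.nth_strictMono hinf).le_apply
    omega
  refine tendsto_of_tendsto_of_tendsto_of_le_of_le' (hF.comp hnM) (hG.comp hnM) ?_ ?_
  · filter_upwards [eventually_ge_atTop 2] with M hM
    obtain ⟨h1, hg1, hg2, hlow, hhigh⟩ := key B M hM
    set n := Nat.nth (· ∈ ruleSel B) M / 2
    show (2 * cnt B n : ℝ) / ((n : ℝ) + cnt B n + 1) ≤ dens (S B) M
    rw [dens]
    apply div_le_div₀ (by positivity) ?_ (by exact_mod_cast Nat.lt_of_lt_of_le (by norm_num) hM) ?_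
    · exact_mod_cast hlow
    · exact_mod_cast Nat.cast_le.2 hg2
  · filter_upwards [eventually_ge_atTop 2] with M hM
    obtain ⟨h1, hg1, hg2, hlow, hhigh⟩ := key B M hM
    set n := Nat.nth (· ∈ ruleSel B) M / 2
    show dens (S B) M ≤ ((2 * cnt B n : ℝ) + 2) / ((n : ℝ) + cnt B n)
    rw [dens]
    apply div_le_div₀ (by positivity) ?_ ?_ ?_
    · exact_mod_cast hhigh
    · have : 1 ≤ n + cnt B n := by omega
      exact_mod_cast Nat.lt_of_lt_of_le Nat.zero_lt_one this
    · exact_mod_cast Nat.cast_le.2 hg1
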